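/- In the interval monoid Int(P) of a poset P, every nontrivial element admits a unique expression as a product I₁ ⋯ Iₚ of proper intervals such that the target of Iᵢ differs from the source of Iᵢ₊₁ for every i < p (a normal decomposition). -/

import Mathlib

/-! Common definitions: multifractions, divisibility, interval monoids, zigzags. -/

section Defs

variable {M : Type*}

/-- A multifraction on a monoid `M`: a finite sequence with entries alternately in `M`
(sign `true`) and in a formal disjoint copy of `M` (sign `false`). -/
structure Multifraction (M : Type*) [Monoid M] where
  entries : List (Bool × M)
  alt : entries.Chain' fun p q => p.1 ≠ q.1

/-- The product of two multifraction entry lists: merge the adjacent entries when they have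
the same sign, concatenate otherwise. -/
def mfMul [Monoid M] (l₁ l₂ : List (Bool × M)) : List (Bool × M) :=
  match l₁.getLast?, l₂ with
  | some (b, x), (c, y) :: t =>
      if b = c then l₁.dropLast ++ (b, if b then x * y else y * x) :: t else l₁ ++ l₂
  | _, _ => l₁ ++ l₂

/-- The one-entry positive multifraction. -/
def mfPos [Monoid M] (x : M) : Multifraction M := ⟨[(true, x)], List.isChain_singleton _⟩

/-- The one-entry negative multifraction. -/
def mfNeg [Monoid M] (x : M) : Multifraction M := ⟨[(false, x)], List.isChain_singleton _⟩

/-- `a` left divides `b`. -/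
def LDvd [Monoid M] (a b : M) : Prop := ∃ c, a * c = b

/-- `a` right divides `b`. -/
def RDvd [Monoid M] (a b : M) : Prop := ∃ c, c * a = b

/-- `M` is (left and right) cancellative. -/
def Cancellative (M : Type*) [Monoid M] : Prop :=
  (∀ a b c : M, a * b = a * c → b = c) ∧ (∀ a b c : M, b * a = c * a → b = c)

/-- `1` is the only invertible element of `M`. -/
def TrivialUnits (M : Type*) [Monoid M] : Prop := ∀ a : M, IsUnit a → a = 1

/-- Any two elements admit a left gcd. -/
def HasLeftGcds (M : Type*) [Monoid M] : Prop :=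
  ∀ a b : M, ∃ d, LDvd d a ∧ LDvd d b ∧ ∀ e, LDvd e a → LDvd e b → LDvd e d

/-- Any two elements admit a right gcd. -/
def HasRightGcds (M : Type*) [Monoid M] : Prop :=
  ∀ a b : M, ∃ d, RDvd d a ∧ RDvd d b ∧ ∀ e, RDvd e a → RDvd e b → RDvd e d

/-- `M` is a gcd-monoid. -/
def GcdMonoidProp (M : Type*) [Monoid M] : Prop :=
  Cancellative M ∧ TrivialUnits M ∧ HasLeftGcds M ∧ HasRightGcds M

/-- `m` is a right lcm of `u` and `v`. -/
def IsRightLcm [Monoid M] (u v m : M) : Prop :=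
  LDvd u m ∧ LDvd v m ∧ ∀ w, LDvd u w → LDvd v w → LDvd m w

/-- `m` is a left lcm of `u` and `v`. -/
def IsLeftLcm [Monoid M] (u v m : M) : Prop :=
  RDvd u m ∧ RDvd v m ∧ ∀ w, RDvd u w → RDvd v w → RDvd m w

/-- `M` is a noetherian monoid: cancellative, with trivial units, and with well-founded
proper left and right divisibility. -/
def NoetherianMonoid (M : Type*) [Monoid M] : Prop :=
  Cancellative M ∧ TrivialUnits M ∧
    WellFounded (fun a b : M => LDvd a b ∧ a ≠ b) ∧
    WellFounded (fun a b : M => RDvd a b ∧ a ≠ b)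

/-- An atom of a monoid. -/
def MonAtom [Monoid M] (a : M) : Prop :=
  a ≠ 1 ∧ ∀ b c : M, a = b * c → b = 1 ∨ c = 1

/-- `η : M →* G` exhibits `G` as the enveloping (universal) group of `M`. -/
def IsEnvelopingGroup (M : Type*) [Monoid M] (G : Type*) [Group G] (η : M →* G) : Prop :=
  ∀ (H : Type*) [Group H] (f : M →* H), ∃! g : G →* H, g.comp η = f

/-- Evaluation of a multifraction in a group `G` through `η : M →* G`. -/
def mfEval [Monoid M] {G : Type*} [Group G] (η : M →* G) (a : Multifraction M) : G :=
  (a.entries.map fun p => if p.1 then η p.2 else (η p.2)⁻¹).prod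

/-- A multifraction is trivial if all its entries equal `1`. -/
def MfTrivial [Monoid M] (a : Multifraction M) : Prop := ∀ p ∈ a.entries, p.2 = 1

/-- `a` is a proper piece of `b` (relative to a monoid structure on multifractions). -/
def Piece [Monoid M] [Monoid (Multifraction M)] (a b : Multifraction M) : Prop :=
  ∃ c d : Multifraction M, b = c * a * d ∧ ¬(MfTrivial c ∧ MfTrivial d)

/-- The `j`-th entry of a multifraction (with default `(true, 1)`). -/
def mfEntry [Monoid M] (a : Multifraction M) (j : ℕ) : Bool × M :=
  (a.entries[j]?).getD (true, 1)

/-- The reduction rule `R_{i,x}` (here `j = i - 1` is the 0-based level):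
`b = a • R_{i,x}`. -/
def RedAt [Monoid M] (a b : Multifraction M) (j : ℕ) (x : M) : Prop :=
  b.entries.length = a.entries.length ∧ j + 1 < a.entries.length ∧
  (∀ k, ¬(j - 1 ≤ k ∧ k ≤ j + 1) → b.entries[k]? = a.entries[k]?) ∧
  (∀ k, (mfEntry b k).1 = (mfEntry a k).1) ∧
  (if (mfEntry a j).1 then
     if j = 0 then
       (mfEntry b 0).2 * x = (mfEntry a 0).2 ∧ (mfEntry b 1).2 * x = (mfEntry a 1).2
     else ∃ x' : M,
       (mfEntry b (j - 1)).2 = x' * (mfEntry a (j - 1)).2 ∧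
       (mfEntry b j).2 * x = x' * (mfEntry a j).2 ∧
       IsLeftLcm x (mfEntry a j).2 ((mfEntry b j).2 * x) ∧
       (mfEntry b (j + 1)).2 * x = (mfEntry a (j + 1)).2
   else
     if j = 0 then
       x * (mfEntry b 0).2 = (mfEntry a 0).2 ∧ x * (mfEntry b 1).2 = (mfEntry a 1).2
     else ∃ x' : M,
       (mfEntry b (j - 1)).2 = (mfEntry a (j - 1)).2 * x' ∧
       x * (mfEntry b j).2 = (mfEntry a j).2 * x' ∧
       IsRightLcm x (mfEntry a j).2 (x * (mfEntry b j).2) ∧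
       x * (mfEntry b (j + 1)).2 = (mfEntry a (j + 1)).2)

/-- One reduction step. -/
def Reduces [Monoid M] (a b : Multifraction M) : Prop := ∃ j x, x ≠ 1 ∧ RedAt a b j x

/-- A multifraction is reducible if some rule `R_{i,x}` with `x ≠ 1` applies to it. -/
def Reducible [Monoid M] (a : Multifraction M) : Prop := ∃ b, Reduces a b

/-- Iterated reduction. -/
def ReducesStar [Monoid M] : Multifraction M → Multifraction M → Prop :=
  Relation.ReflTransGen Reduces

/-- Semi-convergence of reduction (relative to an enveloping group `η : M →* G`):
every unital multifraction reduces to a trivial one. -/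
def SemiConvergent [Monoid M] {G : Type*} [Group G] (η : M →* G) : Prop :=
  ∀ a : Multifraction M, mfEval η a = 1 → ∃ b, ReducesStar a b ∧ MfTrivial b

end Defs

section Interval

variable (P : Type*) [PartialOrder P]

/-- The intervals of a poset `P`. -/
def Iv := {p : P × P // p.1 ≤ p.2}

/-- The defining relations of the interval monoid of `P`. -/
def intervalRel : FreeMonoid (Iv P) → FreeMonoid (Iv P) → Prop := fun u v =>
  (∃ (x y z : P) (hxy : x ≤ y) (hyz : y ≤ z),
      u = FreeMonoid.of ⟨(x, z), hxy.trans hyz⟩ ∧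
      v = FreeMonoid.of ⟨(x, y), hxy⟩ * FreeMonoid.of ⟨(y, z), hyz⟩) ∨
  (∃ x : P, u = FreeMonoid.of ⟨(x, x), le_refl x⟩ ∧ v = 1)

/-- The interval monoid of the poset `P`. -/
def IntervalMonoid := (conGen (intervalRel P)).Quotient

instance : Monoid (IntervalMonoid P) :=
  inferInstanceAs (Monoid (conGen (intervalRel P)).Quotient)

variable {P}

/-- The generator `[x, y]` of the interval monoid. -/
def intv (I : Iv P) : IntervalMonoid P := (conGen (intervalRel P)).mk' (FreeMonoid.of I)

variable (P)

/-- `P` is a local lattice: each `P^{≥ x}` is a meet-semilattice and each `P^{≤ x}` is a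
join-semilattice. -/
def LocalLattice : Prop :=
  (∀ x a b : P, x ≤ a → x ≤ b →
      ∃ m, x ≤ m ∧ m ≤ a ∧ m ≤ b ∧ ∀ c, x ≤ c → c ≤ a → c ≤ b → c ≤ m) ∧
  (∀ x a b : P, a ≤ x → b ≤ x →
      ∃ m, m ≤ x ∧ a ≤ m ∧ b ≤ m ∧ ∀ c, c ≤ x → a ≤ c → b ≤ c → m ≤ c)

/-- Noetherianity conditions on the poset `P`: no infinite descending chain in any `P^{≥ x}`
and no infinite ascending chain in any `P^{≤ x}`. -/
def PosetNoethCond : Prop :=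
  ∀ x : P, WellFounded (fun a b : {y : P // x ≤ y} => (a : P) < (b : P)) ∧
    WellFounded (fun a b : {y : P // y ≤ x} => (b : P) < (a : P))

variable {P}

/-- A simple multifraction on the interval monoid: each entry is a proper interval, and
consecutive entries share their target (at positive positions) or source (at negative ones). -/
def MfSimple (a : Multifraction (IntervalMonoid P)) : Prop :=
  ∃ l : List (Bool × Iv P),
    a.entries = l.map (fun p => (p.1, intv p.2)) ∧
    (∀ p ∈ l, p.2.1.1 ≠ p.2.1.2) ∧
    l.Chain' fun p q => if p.1 then p.2.1.2 = q.2.1.2 else p.2.1.1 = q.2.1.1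

/-- A positive `n`-zigzag in `P`. -/
def PosZigzag (n : ℕ) (x : ℕ → P) : Prop :=
  ∀ i ≤ n, i % 2 = 0 → (1 ≤ i → x i < x (i - 1)) ∧ (i < n → x i < x (i + 1))

/-- A negative `n`-zigzag in `P`. -/
def NegZigzag (n : ℕ) (x : ℕ → P) : Prop :=
  ∀ i ≤ n, i % 2 = 1 → (1 ≤ i → x i < x (i - 1)) ∧ (i < n → x i < x (i + 1))

/-- The zigzag `x` is simple: `x₁, ..., xₙ` are pairwise distinct. -/
def SimpleZz (n : ℕ) (x : ℕ → P) : Prop :=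
  ∀ i j, 1 ≤ i → i < j → j ≤ n → x i ≠ x j

/-- Reducibility of a zigzag at level `i`. -/
def ZzRedAt (n : ℕ) (x : ℕ → P) (i : ℕ) : Prop :=
  1 ≤ i ∧ i < n ∧
  ((2 ≤ i ∧ x i < x (i + 1) ∧
      ∃ y, x i < y ∧ y ≤ x (i + 1) ∧ ∃ u, x (i - 1) ≤ u ∧ y ≤ u) ∨
   (2 ≤ i ∧ x (i + 1) < x i ∧
      ∃ y, x (i + 1) ≤ y ∧ y < x i ∧ ∃ u, u ≤ x (i - 1) ∧ u ≤ y) ∨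
   (i = 1 ∧ x 0 < x 1 ∧ ∃ y, x 0 ≤ y ∧ y < x 1 ∧ x 2 ≤ y) ∨
   (i = 1 ∧ x 1 < x 0 ∧ ∃ y, x 1 < y ∧ y ≤ x 0 ∧ y ≤ x 2))

/-- A zigzag is reducible if it is reducible at some level. -/
def ZzReducible (n : ℕ) (x : ℕ → P) : Prop := ∃ i, ZzRedAt n x i

/-- The multifraction `a` is the image of the positive `n`-zigzag `x` under the map `F`. -/
def PosImage (n : ℕ) (x : ℕ → P) (a : Multifraction (IntervalMonoid P)) : Prop :=
  a.entries.length = n ∧ ∀ j < n,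
    if j % 2 = 0 then
      ∃ h : x j ≤ x (j + 1), a.entries[j]? = some (true, intv ⟨(x j, x (j + 1)), h⟩)
    else
      ∃ h : x (j + 1) ≤ x j, a.entries[j]? = some (false, intv ⟨(x (j + 1), x j), h⟩)

/-- The multifraction `a` is the image of the negative `n`-zigzag `x` under the map `F`. -/
def NegImage (n : ℕ) (x : ℕ → P) (a : Multifraction (IntervalMonoid P)) : Prop :=
  a.entries.length = n ∧ ∀ j < n,
    if j % 2 = 0 then
      ∃ h : x (j + 1) ≤ x j, a.entries[j]? = some (false, intv ⟨(x (j + 1), x j), h⟩)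
    else
      ∃ h : x j ≤ x (j + 1), a.entries[j]? = some (true, intv ⟨(x j, x (j + 1)), h⟩)

end Interval

/-!
Normal decompositions are the normal forms of a rewriting system on words of intervals:
drop an interval `[x, x]`, merge adjacent `[x, y][y, z]` into `[x, z]`. Prepending an interval
to a normal word and renormalizing defines an action of the free monoid on words, and this
action respects the defining relations of `Int(P)`, so it descends to an action of `Int(P)`.
Applying an element `a` to the empty word yields a normal word with product `a`, while a normal
word `l` is recovered from the image of its product, which gives uniqueness.
-/

namespace Iv

variable {P : Type*} [PartialOrder P]

theorem ext {I J : Iv P} (h : I.1 = J.1) : I = J := Subtype.ext h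

def comp (I J : Iv P) (h : I.1.2 = J.1.1) : Iv P :=
  ⟨(I.1.1, J.1.2), I.2.trans (h.trans_le J.2)⟩

theorem comp_ne {I J : Iv P} (hI : I.1.1 ≠ I.1.2) (h : I.1.2 = J.1.1) :
    (comp I J h).1.1 ≠ (comp I J h).1.2 :=
  ((I.2.lt_of_ne hI).trans_le (h.trans_le J.2)).ne

end Iv

namespace IntervalMonoid

variable {P : Type*} [PartialOrder P]

theorem intv_eq_one {I : Iv P} (h : I.1.1 = I.1.2) : intv I = 1 := by
  obtain ⟨⟨x, y⟩, hxy⟩ := I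
  obtain rfl : x = y := h
  exact (Con.eq _).2 (ConGen.Rel.of _ _ (Or.inr ⟨x, rfl, rfl⟩))

theorem intv_comp (I J : Iv P) (h : I.1.2 = J.1.1) : intv (Iv.comp I J h) = intv I * intv J := by
  obtain ⟨⟨x, y⟩, hxy⟩ := I
  obtain ⟨⟨y', z⟩, hyz⟩ := J
  obtain rfl : y = y' := h
  exact (Con.eq _).2 (ConGen.Rel.of _ _ (Or.inl ⟨x, y, z, hxy, hyz, rfl, rfl⟩))

def IsNormal (l : List (Iv P)) : Prop :=
  (∀ I ∈ l, I.1.1 ≠ I.1.2) ∧ l.IsChain (fun I J => I.1.2 ≠ J.1.1)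

open Classical in
noncomputable def normCons (I : Iv P) : List (Iv P) → List (Iv P)
  | [] => if I.1.1 = I.1.2 then [] else [I]
  | J :: t =>
    if I.1.1 = I.1.2 then J :: t
    else if h : I.1.2 = J.1.1 then Iv.comp I J h :: t
    else I :: J :: t

theorem normCons_of_eq {I : Iv P} (hI : I.1.1 = I.1.2) (l : List (Iv P)) : normCons I l = l := by
  cases l <;> simp [normCons, hI]

theorem normCons_nil {I : Iv P} (hI : I.1.1 ≠ I.1.2) : normCons I [] = [I] := by
  simp [normCons, hI]

theorem normCons_cons_of_eq {I J : Iv P} (hI : I.1.1 ≠ I.1.2) (h : I.1.2 = J.1.1)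
    (t : List (Iv P)) : normCons I (J :: t) = Iv.comp I J h :: t := by
  rw [normCons.eq_2, if_neg hI, dif_pos h]

theorem normCons_cons_of_ne {I J : Iv P} (hI : I.1.1 ≠ I.1.2) (h : I.1.2 ≠ J.1.1)
    (t : List (Iv P)) : normCons I (J :: t) = I :: J :: t := by
  rw [normCons.eq_2, if_neg hI, dif_neg h]

theorem normCons_comp (I J : Iv P) (h : I.1.2 = J.1.1) (l : List (Iv P)) :
    normCons (Iv.comp I J h) l = normCons I (normCons J l) := by
  by_cases hI : I.1.1 = I.1.2
  · have hIJ : Iv.comp I J h = J := Iv.ext (Prod.ext (hI.trans h) rfl)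
    rw [normCons_of_eq hI, hIJ]
  by_cases hJ : J.1.1 = J.1.2
  · have hIJ : Iv.comp I J h = I := Iv.ext (Prod.ext rfl (h.trans hJ).symm)
    rw [normCons_of_eq hJ, hIJ]
  have hIJ := Iv.comp_ne hI h
  rcases l with _ | ⟨K, t⟩
  · rw [normCons_nil hJ, normCons_nil hIJ, normCons_cons_of_eq hI h]
  by_cases hK : J.1.2 = K.1.1
  · rw [normCons_cons_of_eq hIJ hK, normCons_cons_of_eq hJ hK,
      normCons_cons_of_eq (J := Iv.comp J K hK) hI h]
    rfl
  · rw [normCons_cons_of_ne hIJ hK, normCons_cons_of_ne hJ hK, normCons_cons_of_eq hI h]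

theorem isNormal_normCons {l : List (Iv P)} (hl : IsNormal l) (I : Iv P) :
    IsNormal (normCons I l) := by
  by_cases hI : I.1.1 = I.1.2
  · rwa [normCons_of_eq hI]
  rcases l with _ | ⟨J, t⟩
  · rw [normCons_nil hI]
    exact ⟨by simpa using hI, List.isChain_singleton _⟩
  by_cases h : I.1.2 = J.1.1
  · rw [normCons_cons_of_eq hI h]
    refine ⟨List.forall_mem_cons.2 ⟨Iv.comp_ne hI h, fun K hK => hl.1 K (.tail _ hK)⟩, ?_⟩
    rcases t with _ | ⟨K, t⟩
    · exact List.isChain_singleton _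
    · exact List.isChain_cons_cons.2 (List.isChain_cons_cons.1 hl.2)
  · rw [normCons_cons_of_ne hI h]
    exact ⟨by simpa [hI] using hl.1, List.isChain_cons_cons.2 ⟨h, hl.2⟩⟩

theorem IsNormal.normCons_eq_cons {I : Iv P} {t : List (Iv P)} (h : IsNormal (I :: t)) :
    normCons I t = I :: t := by
  have hI := h.1 I List.mem_cons_self
  rcases t with _ | ⟨J, t⟩
  · exact normCons_nil hI
  · exact normCons_cons_of_ne hI (List.isChain_cons_cons.1 h.2).1 t

theorem prod_map_normCons (I : Iv P) (l : List (Iv P)) :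
    ((normCons I l).map intv).prod = intv I * (l.map intv).prod := by
  by_cases hI : I.1.1 = I.1.2
  · rw [normCons_of_eq hI, intv_eq_one hI, one_mul]
  rcases l with _ | ⟨J, t⟩
  · simp [normCons_nil hI]
  by_cases h : I.1.2 = J.1.1
  · simp [normCons_cons_of_eq hI h, intv_comp, mul_assoc]
  · simp [normCons_cons_of_ne hI h]

noncomputable def normAction : IntervalMonoid P →* Function.End (List (Iv P)) :=
  (conGen (intervalRel P)).lift (FreeMonoid.lift normCons) <| Con.conGen_le.2 <| by
    rintro u v (⟨x, y, z, hxy, hyz, rfl, rfl⟩ | ⟨x, rfl, rfl⟩)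
    · exact funext (normCons_comp ⟨(x, y), hxy⟩ ⟨(y, z), hyz⟩ rfl)
    · exact funext (normCons_of_eq rfl)

theorem normAction_intv (I : Iv P) : normAction (intv I) = normCons I :=
  Con.lift_mk' _ _

theorem normAction_mul_apply (a b : IntervalMonoid P) (l : List (Iv P)) :
    normAction (a * b) l = normAction a (normAction b l) := by
  rw [map_mul]
  rfl

@[elab_as_elim]
theorem induction_on {motive : IntervalMonoid P → Prop} (a : IntervalMonoid P)
    (one : motive 1) (intv_mul : ∀ I a, motive a → motive (intv I * a)) : motive a := by
  induction a using Con.induction_on with | H w => ?_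
  induction w using FreeMonoid.inductionOn' with
  | one => exact one
  | of_mul I w ih => exact intv_mul I _ ih

theorem isNormal_normAction {l : List (Iv P)} (hl : IsNormal l) (a : IntervalMonoid P) :
    IsNormal (normAction a l) := by
  induction a using induction_on with
  | one => exact hl
  | intv_mul I a ih => rw [normAction_mul_apply, normAction_intv]; exact isNormal_normCons ih I

theorem prod_map_normAction (a : IntervalMonoid P) (l : List (Iv P)) :
    ((normAction a l).map intv).prod = a * (l.map intv).prod := by
  induction a using induction_on with
  | one => rw [one_mul]; rfl
  | intv_mul I a ih => rw [normAction_mul_apply, normAction_intv, prod_map_normCons, ih, mul_assoc]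

theorem IsNormal.normAction_prod {l : List (Iv P)} (hl : IsNormal l) :
    normAction (l.map intv).prod [] = l := by
  induction l with
  | nil => rfl
  | cons I t ih =>
    have ht : IsNormal t := ⟨fun K hK => hl.1 K (List.mem_cons_of_mem _ hK), hl.2.tail⟩
    rw [List.map_cons, List.prod_cons, normAction_mul_apply, ih ht, normAction_intv,
      hl.normCons_eq_cons]

end IntervalMonoid

/-- Every nontrivial element of the interval monoid admits a unique normal decomposition
as a product of proper intervals with non-matching target/source. -/
theorem intervalMonoid_unique_normal_decomposition (P : Type*) [PartialOrder P]
    (a : IntervalMonoid P) (ha : a ≠ 1) :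
    ∃! l : List (Iv P),
      l ≠ [] ∧ (∀ I ∈ l, I.1.1 ≠ I.1.2) ∧
      l.Chain' (fun I J => I.1.2 ≠ J.1.1) ∧
      (l.map intv).prod = a := by
  have hnormal : IntervalMonoid.IsNormal (IntervalMonoid.normAction a []) :=
    IntervalMonoid.isNormal_normAction ⟨by simp, .nil⟩ a
  have hprod : ((IntervalMonoid.normAction a []).map intv).prod = a := by
    rw [IntervalMonoid.prod_map_normAction, List.map_nil, List.prod_nil, mul_one]
  refine ⟨_, ⟨fun h => ha ?_, hnormal.1, hnormal.2, hprod⟩, ?_⟩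
  · rw [← hprod, h, List.map_nil, List.prod_nil]
  · rintro l ⟨-, hproper, hchain, rfl⟩
    exact (IntervalMonoid.IsNormal.normAction_prod ⟨hproper, hchain⟩).symm
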